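/- For each n ≥ 1, the class C^(n) of ordinals α with V_α ≼_n V is not Σ_n definable: there is no Σ_n formula (without parameters) defining C^(n). -/

import Mathlib

/-!  Common framework: the language of set theory, Lévy hierarchy,
Σₙ-elementarity of classes of `ZFSet`s, cumulative hierarchy, etc. -/

open FirstOrder

/-- The language of set theory: a single binary relation symbol (membership). -/
def LSet : FirstOrder.Language where
  Functions _ := Empty
  Relations n := match n with
    | 2 => Unit
    | _ => Empty

/-- `V` (the universe of ZFC sets) as an `LSet`-structure. -/
noncomputable instance : LSet.Structure ZFSet where
  funMap := fun f _ => f.elim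
  RelMap := fun {n} r xs => match n, r, xs with
    | 2, _, xs => xs 0 ∈ xs 1
    | 0, r, _ => r.elim
    | 1, r, _ => r.elim
    | _+3, r, _ => r.elim

/-- Any class of sets as an `LSet`-structure, with the inherited membership relation. -/
noncomputable instance (S : Set ZFSet) : LSet.Structure S where
  funMap := fun f _ => f.elim
  RelMap := fun {n} r xs => match n, r, xs with
    | 2, _, xs => (xs 0 : ZFSet) ∈ (xs 1 : ZFSet)
    | 0, r, _ => r.elim
    | 1, r, _ => r.elim
    | _+3, r, _ => r.elim

mutual
  /-- The Σₙ formulas of the Lévy-style prenex hierarchy. -/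
  inductive IsSigmaFml : ℕ → ∀ {k : ℕ}, LSet.BoundedFormula Empty k → Prop
    | of_qf {k} {φ : LSet.BoundedFormula Empty k} : φ.IsQF → IsSigmaFml 0 φ
    | of_pi {n k} {φ : LSet.BoundedFormula Empty k} : IsPiFml n φ → IsSigmaFml (n+1) φ
    | ex {n k} {φ : LSet.BoundedFormula Empty (k+1)} :
        IsSigmaFml (n+1) φ → IsSigmaFml (n+1) φ.ex
  /-- The Πₙ formulas of the Lévy-style prenex hierarchy. -/
  inductive IsPiFml : ℕ → ∀ {k : ℕ}, LSet.BoundedFormula Empty k → Prop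
    | of_qf {k} {φ : LSet.BoundedFormula Empty k} : φ.IsQF → IsPiFml 0 φ
    | of_sigma {n k} {φ : LSet.BoundedFormula Empty k} : IsSigmaFml n φ → IsPiFml (n+1) φ
    | all {n k} {φ : LSet.BoundedFormula Empty (k+1)} :
        IsPiFml (n+1) φ → IsPiFml (n+1) φ.all
end

/-- Satisfaction of a formula (with `k` parameters) in `V`. -/
def SatV {k : ℕ} (φ : LSet.BoundedFormula Empty k) (xs : Fin k → ZFSet) : Prop :=
  φ.Realize (fun e => e.elim) xs

/-- Satisfaction of a formula (with `k` parameters) in a class `S` of sets. -/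
def SatIn (S : Set ZFSet) {k : ℕ} (φ : LSet.BoundedFormula Empty k) (xs : Fin k → S) : Prop :=
  φ.Realize (fun e => e.elim) xs

/-- `S ≼ₙ V` : Σₙ formulas with parameters in `S` are absolute between `S` and `V`. -/
def SigmaElementary (n : ℕ) (S : Set ZFSet) : Prop :=
  ∀ {k : ℕ} (φ : LSet.BoundedFormula Empty k), IsSigmaFml n φ →
    ∀ xs : Fin k → S, (SatIn S φ xs ↔ SatV φ (fun i => (xs i : ZFSet)))

/-- The cumulative hierarchy `V_α`, as the class of sets of rank `< α`. -/
def Vset (α : Ordinal) : Set ZFSet := {x | x.rank < α}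

universe u

/-- `H_κ`: the class of sets hereditarily of cardinality `< κ`. -/
def Hset (κ : Cardinal.{u}) : Set ZFSet.{u} :=
  {x | ∃ t : ZFSet, t.IsTransitive ∧ x ⊆ t ∧ Cardinal.mk t.toSet < Cardinal.lift.{u+1} κ}

/-- The class `C⁽ⁿ⁾ = {α : V_α ≼ₙ V}`. -/
def Cclass (n : ℕ) : Set Ordinal := {α | SigmaElementary n (Vset α)}

/-- `x` is a (von Neumann) ordinal: a transitive set of transitive sets. -/
def ZFOrd (x : ZFSet) : Prop := x.IsTransitive ∧ ∀ y ∈ x, ZFSet.IsTransitive y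

/-- A transitive class of sets. -/
def TransClass (M : Set ZFSet) : Prop := ∀ x ∈ M, ∀ y, y ∈ x → y ∈ M

/-- `j` is an elementary embedding of `V` into the class `M`. -/
structure ElemEmbV (M : Set ZFSet) (j : ZFSet → ZFSet) : Prop where
  maps : ∀ x, j x ∈ M
  elem : ∀ {k : ℕ} (φ : LSet.BoundedFormula Empty k) (xs : Fin k → ZFSet),
    SatV φ xs ↔ SatIn M φ (fun i => ⟨j (xs i), maps (xs i)⟩)

/-- `j` is an elementary embedding of the class `S` into the class `T`. -/
structure ElemEmbBetween (S T : Set ZFSet) (j : ZFSet → ZFSet) : Prop where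
  maps : ∀ x ∈ S, j x ∈ T
  elem : ∀ {k : ℕ} (φ : LSet.BoundedFormula Empty k) (xs : Fin k → ZFSet) (h : ∀ i, xs i ∈ S),
    SatIn S φ (fun i => ⟨xs i, h i⟩) ↔ SatIn T φ (fun i => ⟨j (xs i), maps _ (h i)⟩)

/-- `κ` is the critical point of `j`: `j` fixes all ordinals `< κ` and moves `κ`. -/
def IsCritPt (j : ZFSet → ZFSet) (κ : ZFSet) : Prop :=
  ZFOrd κ ∧ (∀ x, x ∈ κ → j x = x) ∧ j κ ≠ κ

/-- An ultrafilter on (all subsets of) the set `base`. -/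
structure ZFUltra (base : ZFSet) where
  sets : Set ZFSet
  sub : ∀ X ∈ sets, X ⊆ base
  base_mem : base ∈ sets
  empty_not_mem : (∅ : ZFSet) ∉ sets
  upward : ∀ X ∈ sets, ∀ Y, Y ⊆ base → X ⊆ Y → Y ∈ sets
  ultra : ∀ X, X ⊆ base → (X ∈ sets ∨ ZFSet.sep (fun y => y ∉ X) base ∈ sets)

/-- `κ`-completeness: any family of fewer than `|κ|` many members has its
intersection (with the base) in the ultrafilter. -/
def ZFUltra.Complete {b : ZFSet} (κ : ZFSet) (U : ZFUltra b) : Prop :=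
  ∀ F : Set ZFSet, F ⊆ U.sets → Cardinal.mk F < Cardinal.mk κ.toSet →
    ZFSet.sep (fun x => ∀ X ∈ F, x ∈ X) b ∈ U.sets

/-- Nonprincipality: the complement of every singleton is in the ultrafilter. -/
def ZFUltra.Nonprincipal {b : ZFSet} (U : ZFUltra b) : Prop :=
  ∀ x, ZFSet.sep (fun y => y ≠ x) b ∈ U.sets

/-- Normality for an ultrafilter on an ordinal `κ`: closure under diagonal
intersections. -/
def ZFUltra.NormalOn (κ : ZFSet) (U : ZFUltra κ) : Prop :=
  ∀ A : ZFSet → ZFSet, (∀ α ∈ κ, A α ∈ U.sets) →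
    ZFSet.sep (fun α => ∀ β ∈ α, α ∈ A β) κ ∈ U.sets

/-- `P_κ(γ)`: the set of subsets of `γ` of cardinality `< |κ|`. -/
noncomputable def Pkappa (κ γ : ZFSet) : ZFSet :=
  ZFSet.sep (fun x => Cardinal.mk x.toSet < Cardinal.mk κ.toSet) (ZFSet.powerset γ)

/-- Fineness for an ultrafilter on `P_κ(γ)`. -/
def ZFUltra.Fine (κ γ : ZFSet) (U : ZFUltra (Pkappa κ γ)) : Prop :=
  ∀ a ∈ γ, ZFSet.sep (fun x => a ∈ x) (Pkappa κ γ) ∈ U.sets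

/-- Normality for an ultrafilter on `P_κ(γ)`: closure under diagonal intersections. -/
def ZFUltra.NormalP (κ γ : ZFSet) (U : ZFUltra (Pkappa κ γ)) : Prop :=
  ∀ A : ZFSet → ZFSet, (∀ a ∈ γ, A a ∈ U.sets) →
    ZFSet.sep (fun x => ∀ a ∈ x, x ∈ A a) (Pkappa κ γ) ∈ U.sets

/-- `κ` is `γ`-supercompact: there is a `κ`-complete fine normal ultrafilter on `P_κ(γ)`. -/
def GammaSupercompact (κ γ : ZFSet) : Prop :=
  ∃ U : ZFUltra (Pkappa κ γ), U.Complete κ ∧ U.Fine κ γ ∧ U.NormalP κ γ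

/-- `κ` is supercompact. -/
def Supercompact (κ : ZFSet) : Prop :=
  ZFOrd κ ∧ ∀ γ : ZFSet, ZFOrd γ → GammaSupercompact κ γ

/-- `κ` is measurable: it carries a `κ`-complete nonprincipal ultrafilter. -/
def ZFMeasurable (κ : ZFSet) : Prop :=
  ZFOrd κ ∧ ∃ U : ZFUltra κ, U.Complete κ ∧ U.Nonprincipal

/-- `κ` is `λ`-strong. -/
def LambdaStrong (κ : ZFSet) (lam : Ordinal) : Prop :=
  ∃ (M : Set ZFSet) (j : ZFSet → ZFSet), TransClass M ∧ ElemEmbV M j ∧ IsCritPt j κ ∧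
    lam < (j κ).rank ∧ (∀ x, x.rank < lam → x ∈ M)

/-- `κ` is `λ`-`C⁽ⁿ⁾`-strong. -/
def LambdaCnStrong (n : ℕ) (κ : ZFSet) (lam : Ordinal) : Prop :=
  ∃ (M : Set ZFSet) (j : ZFSet → ZFSet), TransClass M ∧ ElemEmbV M j ∧ IsCritPt j κ ∧
    lam < (j κ).rank ∧ (∀ x, x.rank < lam → x ∈ M) ∧ (j κ).rank ∈ Cclass n

/-- `κ` is superstrong. -/
def Superstrong (κ : ZFSet) : Prop :=
  ∃ (M : Set ZFSet) (j : ZFSet → ZFSet), TransClass M ∧ ElemEmbV M j ∧ IsCritPt j κ ∧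
    (∀ x, x.rank < (j κ).rank → x ∈ M)

/-- `κ` is `C⁽ⁿ⁾`-superstrong. -/
def CnSuperstrong (n : ℕ) (κ : ZFSet) : Prop :=
  ∃ (M : Set ZFSet) (j : ZFSet → ZFSet), TransClass M ∧ ElemEmbV M j ∧ IsCritPt j κ ∧
    (∀ x, x.rank < (j κ).rank → x ∈ M) ∧ (j κ).rank ∈ Cclass n

/-- `κ` is `λ`-`C⁽ⁿ⁾`-extendible. -/
def LamCnExtendible (n : ℕ) (κ : ZFSet) (lam : Ordinal) : Prop :=
  ∃ (μ : Ordinal) (j : ZFSet → ZFSet), ElemEmbBetween (Vset lam) (Vset μ) j ∧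
    IsCritPt j κ ∧ lam < (j κ).rank ∧ (j κ).rank ∈ Cclass n

/-- `κ` is `C⁽ⁿ⁾`-extendible. -/
def CnExtendible (n : ℕ) (κ : ZFSet) : Prop :=
  ∀ lam : Ordinal, κ.rank < lam → LamCnExtendible n κ lam

/-- `κ` is extendible. -/
def Extendible (κ : ZFSet) : Prop :=
  ∀ lam : Ordinal, κ.rank < lam →
    ∃ (μ : Ordinal) (j : ZFSet → ZFSet), ElemEmbBetween (Vset lam) (Vset μ) j ∧
      IsCritPt j κ ∧ lam < (j κ).rank

/-!
`C⁽ⁿ⁾` is nonempty: closing an ordinal `ω` times under witnesses of formulas with parameters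
produces an `α` for which `V_α` passes the Tarski–Vaught test. So `C⁽ⁿ⁾` has a least element
`α₀`. If a Σₙ formula `φ` defined `C⁽ⁿ⁾`, the Σₙ sentence `∃ x, φ x` would hold in `V`
(witnessed by `α₀`), hence in `V_α₀`; as `V_α₀ ≼ₙ V`, its witness there would be an ordinal of
`C⁽ⁿ⁾` below `α₀`.
-/

open FirstOrder Language

def setSubtypeEmbedding (S : Set ZFSet.{u}) : S ↪[LSet] ZFSet.{u} where
  toFun := Subtype.val
  inj' := Subtype.val_injective
  map_fun' f := f.elim
  map_rel' {n} r _ := match n, r with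
    | 0, r => r.elim
    | 1, r => r.elim
    | 2, _ => Iff.rfl
    | _ + 3, r => r.elim

theorem satV_iff_realize {k : ℕ} (φ : LSet.BoundedFormula Empty k)
    (v : Empty → ZFSet.{u}) (xs : Fin k → ZFSet.{u}) : SatV φ xs ↔ φ.Realize v xs := by
  unfold SatV
  congr!

def HasWitnessesIn (S T : Set ZFSet.{u}) : Prop :=
  ∀ {k : ℕ} (φ : LSet.BoundedFormula Empty (k + 1)) (xs : Fin k → S) (a : ZFSet.{u}),
    SatV φ (Fin.snoc (fun i => (xs i : ZFSet)) a) →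
      ∃ b : T, SatV φ (Fin.snoc (fun i => (xs i : ZFSet)) b)

theorem sigmaElementary_of_hasWitnessesIn_self {S : Set ZFSet.{u}} (hS : HasWitnessesIn S S)
    (n : ℕ) : SigmaElementary n S := by
  intro k φ _ xs
  let f := (setSubtypeEmbedding S).toElementaryEmbedding fun _ φ xs a h => by
    obtain ⟨b, hb⟩ := hS φ xs a ((satV_iff_realize _ _ _).2 h)
    exact ⟨b, (satV_iff_realize _ _ _).1 hb⟩
  have hv : (f ∘ fun e => e.elim : Empty → ZFSet.{u}) = fun e => e.elim := Subsingleton.elim _ _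
  have := f.map_boundedFormula φ (fun e => e.elim) xs
  rw [hv] at this
  exact this.symm

theorem exists_forall_exists_rank_lt_of_small {ι : Type*} [Small.{u} ι]
    (P : ι → ZFSet.{u} → Prop) :
    ∃ β : Ordinal.{u}, ∀ i, (∃ a, P i a) → ∃ a, a.rank < β ∧ P i a := by
  classical
  let r : ι → Ordinal.{u} := fun i => if h : ∃ a, P i a then Order.succ h.choose.rank else 0
  refine ⟨⨆ i, r i, fun i h => ⟨h.choose, ?_, h.choose_spec⟩⟩
  calc h.choose.rank < r i := by simp only [r, dif_pos h]; exact Order.lt_succ _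
    _ ≤ ⨆ i, r i := Ordinal.le_iSup r i

instance small_vset (α : Ordinal.{u}) : Small.{u} (Vset α) := by
  have : Vset α = (ZFSet.vonNeumann α).toSet := Set.ext fun _ => ZFSet.mem_vonNeumann.symm
  rw [this]
  exact (ZFSet.vonNeumann α).small_coe

theorem exists_gt_hasWitnessesIn_vset (α : Ordinal.{u}) :
    ∃ β > α, HasWitnessesIn (Vset α) (Vset β) := by
  obtain ⟨β, hβ⟩ := exists_forall_exists_rank_lt_of_small
    fun (p : Σ k : ℕ, LSet.BoundedFormula Empty (k + 1) × (Fin k → Vset α)) b =>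
      SatV p.2.1 (Fin.snoc (fun i => (p.2.2 i : ZFSet)) b)
  refine ⟨max (Order.succ α) β, (Order.lt_succ α).trans_le (le_max_left _ _),
    fun φ xs a h => ?_⟩
  obtain ⟨b, hb, hφb⟩ := hβ ⟨_, φ, xs⟩ ⟨a, h⟩
  exact ⟨⟨b, hb.trans_le (le_max_right _ _)⟩, hφb⟩

theorem exists_hasWitnessesIn_vset_self :
    ∃ α : Ordinal.{u}, HasWitnessesIn (Vset α) (Vset α) := by
  choose next lt_next next_spec using exists_gt_hasWitnessesIn_vset.{u}
  let chain : ℕ → Ordinal.{u} := fun m => next^[m] 0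
  have chain_mono : Monotone chain := monotone_nat_of_le_succ fun m => by
    simpa only [chain, Function.iterate_succ_apply'] using (lt_next _).le
  refine ⟨⨆ m, chain m, fun φ xs a h => ?_⟩
  -- the finitely many parameters already lie in some `V_(chain m)`
  choose f hf using fun i => Ordinal.lt_iSup_iff.1 (xs i).2
  let m := Finset.univ.sup f
  have hxs : ∀ i, (xs i : ZFSet).rank < chain m :=
    fun i => (hf i).trans_le (chain_mono (Finset.le_sup (Finset.mem_univ i)))
  obtain ⟨⟨b, hb⟩, hφb⟩ := next_spec (chain m) φ (fun i => ⟨xs i, hxs i⟩) a h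
  have hle : next (chain m) ≤ ⨆ m, chain m := by
    simpa only [chain, Function.iterate_succ_apply'] using Ordinal.le_iSup chain (m + 1)
  exact ⟨⟨b, hb.trans_le hle⟩, hφb⟩

theorem cclass_nonempty (n : ℕ) : (Cclass.{u} n).Nonempty :=
  let ⟨α, hα⟩ := exists_hasWitnessesIn_vset_self.{u}
  ⟨α, sigmaElementary_of_hasWitnessesIn_self hα n⟩

theorem SigmaElementary.exists_mem_satV {n : ℕ} {S : Set ZFSet.{u}}
    (hS : SigmaElementary (n + 1) S) {φ : LSet.BoundedFormula Empty 1}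
    (hφ : IsSigmaFml (n + 1) φ) {x : ZFSet.{u}} (hx : SatV φ ![x]) :
    ∃ a ∈ S, SatV φ ![a] := by
  have hex : SatIn S φ.ex finZeroElim := by
    rw [hS φ.ex hφ.ex, SatV, BoundedFormula.realize_ex]
    rw [← Matrix.Fin.snoc_vecEmpty] at hx
    exact ⟨x, hx⟩
  rw [SatIn, BoundedFormula.realize_ex] at hex
  obtain ⟨a, ha⟩ := hex
  refine ⟨a, a.2, ?_⟩
  rw [← Matrix.Fin.snoc_vecEmpty]
  exact (hS φ hφ (Fin.snoc finZeroElim a)).1 ha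

/-- For `n ≥ 1`, the class `C⁽ⁿ⁾` is not definable by a parameter-free Σₙ formula. -/
theorem stmt3 (n : ℕ) (hn : 1 ≤ n) :
    ¬ ∃ φ : LSet.BoundedFormula Empty 1, IsSigmaFml n φ ∧
      ∀ x : ZFSet, (SatV φ ![x] ↔ (ZFOrd x ∧ x.rank ∈ Cclass n)) := by
  rintro ⟨φ, hφ, hdef⟩
  obtain ⟨m, rfl⟩ := Nat.exists_eq_add_of_le' hn
  set α₀ := sInf (Cclass (m + 1))
  have hα₀ : α₀ ∈ Cclass (m + 1) := csInf_mem (cclass_nonempty _)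
  have hzfOrd : ZFOrd α₀.toZFSet :=
    ZFSet.isOrdinal_iff_forall_mem_isTransitive.1 (ZFSet.isOrdinal_toZFSet α₀)
  obtain ⟨a, ha, hφa⟩ := SigmaElementary.exists_mem_satV hα₀ hφ
    ((hdef _).2 ⟨hzfOrd, by rwa [Ordinal.rank_toZFSet]⟩)
  exact (csInf_le' (s := Cclass (m + 1)) ((hdef a).1 hφa).2).not_gt ha
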